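/- Let K be a Hopf algebra with bijective antipode S. Regard K as a left comodule over itself via the coproduct and as a right module over itself via k · h := S(h^{(2)}) k h^{(1)}. Then K is a stable right-left anti-Yetter-Drinfeld module over itself. -/

import Mathlib

open TensorProduct

namespace HC

variable {k : Type} [Field k]
variable {H : Type} [Ring H] [Algebra k H]
variable {M : Type} [AddCommGroup M] [Module k M]

/-- The right-left anti-Yetter-Drinfeld condition
`Δ_M(mh) = S(h⁽³⁾) m⁽⁻¹⁾ h⁽¹⁾ ⊗ m⁽⁰⁾ h⁽²⁾` (right action in curried form,
`m · h = act h m`). -/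
def AYDrl (Δ : H →ₗ[k] H ⊗[k] H) (S : H →ₗ[k] H)
    (act : H →ₗ[k] M →ₗ[k] M) (coact : M →ₗ[k] H ⊗[k] M) : Prop :=
  ∀ (h : H) (m : M) (s : Finset ℕ) (a b : ℕ → H)
    (t : ℕ → Finset ℕ) (c d : ℕ → ℕ → H)
    (u : Finset ℕ) (e : ℕ → H) (m0 : ℕ → M),
    Δ h = ∑ i ∈ s, a i ⊗ₜ b i →
    (∀ i ∈ s, Δ (b i) = ∑ j ∈ t i, c i j ⊗ₜ d i j) →
    coact m = ∑ l ∈ u, e l ⊗ₜ m0 l →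
    coact (act h m) = ∑ i ∈ s, ∑ j ∈ t i, ∑ l ∈ u,
      (S (d i j) * e l * a i) ⊗ₜ act (c i j) (m0 l)

/-- Stability: `m⁽⁰⁾ · m⁽⁻¹⁾ = m`. -/
def StableL (act : H →ₗ[k] M →ₗ[k] M) (coact : M →ₗ[k] H ⊗[k] M) : Prop :=
  ∀ (m : M) (u : Finset ℕ) (e : ℕ → H) (m0 : ℕ → M),
    coact m = ∑ l ∈ u, e l ⊗ₜ m0 l →
    ∑ l ∈ u, act (e l) (m0 l) = m

end HC

open HC TensorProduct

/-- The right `H`-action of a Hopf algebra on itself given by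
`x · h = S(h⁽²⁾) x h⁽¹⁾`, in curried form. -/
noncomputable def adAct {k : Type} [Field k] {H : Type} [Ring H] [HopfAlgebra k H] :
    H →ₗ[k] H →ₗ[k] H :=
  TensorProduct.curry
    ((LinearMap.mul' k H) ∘ₗ
      (TensorProduct.map LinearMap.id
        ((LinearMap.mul' k H) ∘ₗ (TensorProduct.comm k H H).toLinearMap)) ∘ₗ
      (TensorProduct.assoc k H H H).toLinearMap ∘ₗ
      (TensorProduct.map
        ((TensorProduct.map (HopfAlgebra.antipode (R := k)) LinearMap.id) ∘ₗ
          (TensorProduct.comm k H H).toLinearMap ∘ₗ (Coalgebra.comul (R := k)))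
        LinearMap.id))

/-!
The antipode reverses the coproduct, `Δ (S x) = S x₂ ⊗ S x₁`: both sides are convolution inverses
of `Δ` in `Hom(K, K ⊗ K)`. As `Δ` is multiplicative, `Δ (S h₂ * m * h₁) = S h₄ m₁ h₁ ⊗ S h₃ m₂ h₂`,
which by coassociativity is `S h₃ m₁ h₁ ⊗ m₂ · h₂`, the anti-Yetter-Drinfeld formula.
Stability is `S m₂ * m₃ * m₁ = ε m₂ • m₁`, summed to `m`.
-/

open WithConv
open scoped RingTheory.LinearMap

section Coassociativity

variable {R A : Type*} [CommSemiring R] [AddCommMonoid A] [Module R A] [Coalgebra R A]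

-- Both sides are `x ↦ (x₁ ⊗ x₂) ⊗ (x₃ ⊗ x₄)`; the right one splits the middle leg of `x₁ ⊗ x₂ ⊗ x₃`.
lemma Coalgebra.map_comul_comul_comp_comul :
    (δ ⊗ₘ δ) ∘ₗ δ = (_root_.TensorProduct.assoc R A A (A ⊗[R] A)).symm.toLinearMap ∘ₗ
      ((_root_.TensorProduct.assoc R A A A).toLinearMap ∘ₗ
        (δ : A →ₗ[R] A ⊗[R] A).rTensor A).lTensor A ∘ₗ
      (δ : A →ₗ[R] A ⊗[R] A).lTensor A ∘ₗ δ := by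
  simp only [coassoc_simps]

end Coassociativity

namespace HopfAlgebra

variable {R A : Type*} [CommSemiring R] [Semiring A] [HopfAlgebra R A]

-- `∑ S a₁ * a₂ ⊗ a₃ = 1 ⊗ a`
lemma antipode_tmul_one_mul_comul (a : A) :
    μ[R] ((((TensorProduct.mk R A A).flip 1 ∘ₗ antipode R) ⊗ₘ δ) (δ a)) = 1 ⊗ₜ a := by
  have h : μ[R] ∘ₗ (((TensorProduct.mk R A A).flip 1 ∘ₗ antipode R) ⊗ₘ δ) =
      (μ[R] ∘ₗ (antipode R).rTensor A).rTensor A ∘ₗ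
        (TensorProduct.assoc R A A A).symm.toLinearMap ∘ₗ (δ : A →ₗ[R] A ⊗[R] A).lTensor A := by
    ext p q
    simp only [TensorProduct.AlgebraTensorModule.curry_apply, curry_apply,
      LinearMap.restrictScalars_self, LinearMap.comp_apply, map_tmul, LinearMap.lTensor_tmul]
    induction (δ q : A ⊗[R] A) using TensorProduct.induction_on with
    | zero => simp
    | tmul x y => simp
    | add x y hx hy => simp_all [tmul_add]
  rw [← LinearMap.comp_apply (μ[R]), h]
  simp only [LinearMap.comp_apply, LinearEquiv.coe_coe, Coalgebra.coassoc_symm_apply,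
    ← LinearMap.rTensor_comp_apply, LinearMap.comp_assoc, mul_antipode_rTensor_comul]
  rw [LinearMap.rTensor_comp_apply, Coalgebra.rTensor_counit_comul]
  simp

lemma comul_left_inv :
    toConv ((antipode R ⊗ₘ antipode R) ∘ₗ (TensorProduct.comm R A A).toLinearMap ∘ₗ δ) *
      toConv (δ : A →ₗ[R] A ⊗[R] A) = 1 := by
  -- `L (p ⊗ q ⊗ r) = (1 ⊗ S p) * ((S q ⊗ 1) * δ r)`
  set L : A ⊗[R] (A ⊗[R] A) →ₗ[R] A ⊗[R] A := μ[R] ∘ₗ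
    ((TensorProduct.mk R A A 1 ∘ₗ antipode R) ⊗ₘ
      μ[R] ∘ₗ (((TensorProduct.mk R A A).flip 1 ∘ₗ antipode R) ⊗ₘ δ))
  have hL : L ∘ₗ (δ : A →ₗ[R] A ⊗[R] A).lTensor A =
      TensorProduct.mk R A A 1 ∘ₗ μ[R] ∘ₗ (antipode R).rTensor A := by
    ext p r
    simp [L, antipode_tmul_one_mul_comul]
  have hL' : L ∘ₗ (TensorProduct.assoc R A A A).toLinearMap ∘ₗ (δ : A →ₗ[R] A ⊗[R] A).rTensor A =
      μ[R] ∘ₗ (((antipode R ⊗ₘ antipode R) ∘ₗ (TensorProduct.comm R A A).toLinearMap ∘ₗ δ) ⊗ₘ δ) := by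
    ext p r
    simp only [TensorProduct.AlgebraTensorModule.curry_apply, curry_apply,
      LinearMap.restrictScalars_self, LinearMap.comp_apply, map_tmul, LinearMap.rTensor_tmul]
    induction (δ p : A ⊗[R] A) using TensorProduct.induction_on with
    | zero => simp
    | tmul x y => simp [L, ← mul_assoc]
    | add x y hx hy => simp_all [add_tmul]
  ext x
  rw [LinearMap.convMul_apply, ofConv_toConv, ofConv_toConv, ← LinearMap.comp_apply (μ[R]), ← hL']
  simp only [LinearMap.comp_apply, LinearEquiv.coe_coe, Coalgebra.coassoc_apply]
  rw [← LinearMap.comp_apply L, hL]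
  simp [Algebra.algebraMap_eq_smul_one, Algebra.TensorProduct.one_def]

theorem comul_antipode (a : A) :
    δ (antipode R a) = (antipode R ⊗ₘ antipode R) (TensorProduct.comm R A A (δ a)) := by
  have := left_inv_eq_right_inv (M := WithConv (A →ₗ[R] A ⊗[R] A))
    comul_left_inv LinearMap.comul_right_inv
  exact (congr(ofConv $this a)).symm

end HopfAlgebra

section Sandwich

variable {R B C : Type*} [CommSemiring R] [Semiring B] [Algebra R B] [Semiring C] [Algebra R C]

noncomputable def sandwichMap (σ : B →ₗ[R] B) (y : B) : B ⊗[R] B →ₗ[R] B :=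
  μ[R] ∘ₗ (TensorProduct.comm R B B).toLinearMap ∘ₗ (LinearMap.mulRight R y ∘ₗ σ).lTensor B

@[simp]
lemma sandwichMap_tmul (σ : B →ₗ[R] B) (y ξ ζ : B) :
    sandwichMap σ y (ξ ⊗ₜ ζ) = σ ζ * y * ξ := rfl

@[simp]
lemma sandwichMap_zero (σ : B →ₗ[R] B) : sandwichMap σ 0 = 0 := by
  ext; simp

@[simp]
lemma sandwichMap_add (σ : B →ₗ[R] B) (y y' : B) :
    sandwichMap σ (y + y') = sandwichMap σ y + sandwichMap σ y' := by
  ext; simp [mul_add, add_mul]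

lemma map_sandwichMap (f : B →ₐ[R] C) {σ : B →ₗ[R] B} {σ' : C →ₗ[R] C}
    (hf : ∀ b, f (σ b) = σ' (f b)) (y : B) (t : B ⊗[R] B) :
    f (sandwichMap σ y t) = sandwichMap σ' (f y) (Algebra.TensorProduct.map f f t) := by
  induction t using TensorProduct.induction_on with
  | zero => simp
  | tmul ξ ζ => simp [hf]
  | add s t hs ht => simp_all

end Sandwich

section AdjointAction

variable {k H : Type} [Field k] [Ring H] [HopfAlgebra k H]

lemma adAct_eq_sandwichMap (h m : H) :
    adAct (k := k) h m = sandwichMap (HopfAlgebra.antipode k) m (δ h) := by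
  simp only [adAct, curry_apply, LinearMap.comp_apply, LinearEquiv.coe_coe, map_tmul,
    LinearMap.id_apply]
  induction (δ h : H ⊗[k] H) using TensorProduct.induction_on with
  | zero => simp
  | tmul x y => simp [mul_assoc]
  | add s t hs ht => simp_all [add_tmul]

lemma comul_adAct (h m : H) :
    δ (adAct (k := k) h m) = sandwichMap ((HopfAlgebra.antipode k ⊗ₘ HopfAlgebra.antipode k) ∘ₗ
      (TensorProduct.comm k H H).toLinearMap) (δ m) ((δ ⊗ₘ δ) (δ h)) := by
  rw [adAct_eq_sandwichMap]
  exact map_sandwichMap (Bialgebra.comulAlgHom k H) HopfAlgebra.comul_antipode m (δ h)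

-- The left side is `∑ (S d ⊗ S c₂) * y * (a ⊗ c₁)`.
lemma sandwichMap_assoc_comul (y : H ⊗[k] H) (a c d : H) :
    sandwichMap ((HopfAlgebra.antipode k ⊗ₘ HopfAlgebra.antipode k) ∘ₗ
        (TensorProduct.comm k H H).toLinearMap) y
      ((TensorProduct.assoc k H H (H ⊗[k] H)).symm
        (a ⊗ₜ TensorProduct.assoc k H H H (δ c ⊗ₜ d))) =
    (HopfAlgebra.antipode k d ⊗ₜ 1) * (adAct (k := k) c).lTensor H y * (a ⊗ₜ 1) := by
  induction y using TensorProduct.induction_on with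
  | zero => simp
  | tmul e n =>
    rw [LinearMap.lTensor_tmul, adAct_eq_sandwichMap]
    induction (δ c : H ⊗[k] H) using TensorProduct.induction_on with
    | zero => simp
    | tmul x z => simp [mul_assoc]
    | add s t hs ht => simp_all [add_tmul, tmul_add, mul_add, add_mul]
  | add s t hs ht => simp_all [mul_add, add_mul]

lemma lift_adAct_comul (m : H) : TensorProduct.lift (adAct (k := k)) (δ m) = m := by
  -- `T (p ⊗ q ⊗ r) = S q * r * p`
  set T : H ⊗[k] (H ⊗[k] H) →ₗ[k] H := μ[k] ∘ₗ (TensorProduct.comm k H H).toLinearMap ∘ₗ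
    (μ[k] ∘ₗ (HopfAlgebra.antipode k).rTensor H).lTensor H
  have hT : T ∘ₗ (TensorProduct.assoc k H H H).toLinearMap ∘ₗ
      (δ : H →ₗ[k] H ⊗[k] H).rTensor H = TensorProduct.lift adAct := by
    ext p q
    simp only [TensorProduct.AlgebraTensorModule.curry_apply, curry_apply,
      LinearMap.restrictScalars_self, LinearMap.comp_apply, LinearMap.rTensor_tmul, lift.tmul,
      adAct_eq_sandwichMap]
    induction (δ p : H ⊗[k] H) using TensorProduct.induction_on with
    | zero => simp
    | tmul x y => simp [T, mul_assoc]
    | add s t hs ht => simp_all [add_tmul]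
  have hT' : T ∘ₗ (δ : H →ₗ[k] H ⊗[k] H).lTensor H =
      (TensorProduct.rid k H).toLinearMap ∘ₗ (ε : H →ₗ[k] k).lTensor H := by
    ext p r
    simp [T, HopfAlgebra.mul_antipode_rTensor_comul_apply, Algebra.smul_def]
  calc TensorProduct.lift adAct (δ m)
      = T (TensorProduct.assoc k H H H ((δ : H →ₗ[k] H ⊗[k] H).rTensor H (δ m))) := by
        rw [← hT]; rfl
    _ = T ((δ : H →ₗ[k] H ⊗[k] H).lTensor H (δ m)) := by rw [Coalgebra.coassoc_apply]
    _ = m := by rw [← LinearMap.comp_apply T, hT']; simp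

theorem adAct_aydrl :
    AYDrl δ (HopfAlgebra.antipode k) (adAct (k := k) (H := H)) δ := by
  intro h m s a b t c d u e m0 hh hb hm
  have h3 : (δ : H →ₗ[k] H ⊗[k] H).lTensor H (δ h) =
      ∑ i ∈ s, ∑ j ∈ t i, a i ⊗ₜ (c i j ⊗ₜ d i j) := by
    rw [hh, map_sum]
    exact Finset.sum_congr rfl fun i hi => by rw [LinearMap.lTensor_tmul, hb i hi, tmul_sum]
  rw [comul_adAct, ← LinearMap.comp_apply (δ ⊗ₘ δ), Coalgebra.map_comul_comul_comp_comul]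
  simp only [LinearMap.comp_apply, h3, map_sum, LinearMap.lTensor_tmul, LinearMap.rTensor_tmul,
    LinearEquiv.coe_coe, sandwichMap_assoc_comul, hm, Finset.mul_sum, Finset.sum_mul,
    Algebra.TensorProduct.tmul_mul_tmul, mul_one, one_mul]

theorem adAct_stableL :
    StableL (adAct (k := k) (H := H)) δ := by
  intro m u e m0 hm
  simpa [hm] using lift_adAct_comul (k := k) m

end AdjointAction

theorem stmt14_general {k : Type} [Field k] {K : Type} [Ring K] [HopfAlgebra k K] :
    AYDrl (Coalgebra.comul (R := k)) (HopfAlgebra.antipode (R := k))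
        (adAct (k := k) (H := K)) (Coalgebra.comul (R := k)) ∧
      StableL (adAct (k := k) (H := K)) (Coalgebra.comul (R := k)) :=
  ⟨adAct_aydrl, adAct_stableL⟩

/-- A Hopf algebra `K` with bijective antipode, viewed as a
left comodule over itself via the coproduct and a right module over itself via
`x · h = S(h⁽²⁾) x h⁽¹⁾`, is a stable right-left anti-Yetter-Drinfeld module. -/
theorem stmt14 {k : Type} [Field k] {K : Type} [Ring K] [HopfAlgebra k K]
    (Sinv : K →ₗ[k] K)
    (hS : ∀ h : K, Sinv (HopfAlgebra.antipode (R := k) h) = h)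
    (hS' : ∀ h : K, HopfAlgebra.antipode (R := k) (Sinv h) = h) :
    AYDrl (Coalgebra.comul (R := k)) (HopfAlgebra.antipode (R := k))
        (adAct (k := k) (H := K)) (Coalgebra.comul (R := k)) ∧
      StableL (adAct (k := k) (H := K)) (Coalgebra.comul (R := k)) :=
  stmt14_general
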